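/- Strategy extraction for Q-SOS: given a Q-SOS refutation Σ_{p∈enc(φ)} q_p·p + Σ_u q_u·(1-2u) + q + 1 = 0 of a false QBF Q.φ, the universal strategy that on each universal variable u plays (1 - sign(q_u))/2 (evaluated on the preceding variables, with sign(0)=+1) is a countermodel: every play of the evaluation game in which the universal variables are set according to this strategy ends in an assignment falsifying φ. -/

import Mathlib

open MvPolynomial

/-- The rational value of a Boolean. -/
noncomputable def bval (b : Bool) : ℚ := if b then 1 else 0

/-- A Q-SOS refutation of a QBF over variables `Fin n` (in prefix order), with
existential variables marked by `E` and matrix encoded by the polynomials in `P`: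
an identity `Σ_{p∈P} q_p·p + Σ_u q_u·(1-2u) + Σ s² + 1 = 0` where each `q_u`
(for universal `u`) only mentions variables left of `u`. -/
structure QSOS (n : ℕ) (E : Fin n → Bool) (P : Finset (MvPolynomial (Fin n) ℚ)) where
  qp : MvPolynomial (Fin n) ℚ → MvPolynomial (Fin n) ℚ
  qu : Fin n → MvPolynomial (Fin n) ℚ
  sq : Multiset (MvPolynomial (Fin n) ℚ)
  hvars : ∀ u : Fin n, E u = false → ∀ v ∈ (qu u).vars, v < u
  huz : ∀ u : Fin n, E u = true → qu u = 0
  hid : ∑ p ∈ P, qp p * p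
      + ∑ u : Fin n, qu u * (1 - 2 * X u)
      + (sq.map fun s => s ^ 2).sum + 1 = 0

/-- Q-size of a Q-SOS refutation: the number of monomials in the `q_u` polynomials. -/
noncomputable def QSOS.qsize {n : ℕ} {E : Fin n → Bool}
    {P : Finset (MvPolynomial (Fin n) ℚ)} (π : QSOS n E P) : ℕ :=
  ∑ u : Fin n, (π.qu u).support.card

/-- Existential Q-degree of a Q-SOS refutation: the largest number of existential
variables (with multiplicity) in a monomial of some `q_u`. -/
noncomputable def QSOS.exdeg {n : ℕ} {E : Fin n → Bool}
    {P : Finset (MvPolynomial (Fin n) ℚ)} (π : QSOS n E P) : ℕ :=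
  Finset.univ.sup fun u : Fin n =>
    (π.qu u).support.sup fun m => ∑ i ∈ Finset.univ.filter (fun i => E i = true), m i


/-! Evaluate the refutation identity at an assignment `α` that follows the strategy. If `α`
satisfied every `p ∈ P`, the first sum would vanish. Each term `q_u(α)·(1 - 2u)` equals
`|q_u(α)|` because `u` is set to `1` exactly when `q_u(α) < 0`, and the squares are
nonnegative, so the left-hand side would be at least `1`, contradicting `= 0`. -/

theorem mul_one_sub_two_bval_nonneg {q : ℚ} {b : Bool} (hb : b = decide (q < 0)) :
    0 ≤ q * (1 - 2 * bval b) := by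
  rcases lt_or_ge q 0 with hq | hq
  · simp only [hb, hq, decide_true, bval, if_true]
    linarith
  · simp only [hb, not_lt.mpr hq, decide_false, bval, Bool.false_eq_true, if_false]
    linarith

theorem Multiset.sum_map_sq_nonneg {ι R : Type*} [Ring R] [LinearOrder R] [IsOrderedRing R]
    (s : Multiset ι) (f : ι → R) : 0 ≤ (s.map fun i => f i ^ 2).sum :=
  Multiset.sum_nonneg fun _ hx => by
    obtain ⟨i, -, rfl⟩ := Multiset.mem_map.mp hx
    exact sq_nonneg (f i)

namespace QSOS

variable {n : ℕ} {E : Fin n → Bool} {P : Finset (MvPolynomial (Fin n) ℚ)}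

theorem eval_universal_sum_nonneg (π : QSOS n E P) {α : Fin n → Bool}
    (hα : ∀ u, E u = false → α u = decide (eval (fun i => bval (α i)) (π.qu u) < 0)) :
    0 ≤ ∑ u, eval (fun i => bval (α i)) (π.qu u) * (1 - 2 * bval (α u)) := by
  refine Finset.sum_nonneg fun u _ => ?_
  cases hE : E u with
  | true => simp [π.huz u hE]
  | false => exact mul_one_sub_two_bval_nonneg (hα u hE)

theorem eval_identity (π : QSOS n E P) (x : Fin n → ℚ) :
    ∑ p ∈ P, eval x (π.qp p) * eval x p
      + ∑ u, eval x (π.qu u) * (1 - 2 * x u)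
      + (π.sq.map fun s => eval x s ^ 2).sum + 1 = 0 := by
  simpa [map_multiset_sum, Multiset.map_map, Function.comp_def] using congrArg (eval x) π.hid

end QSOS

theorem stmt_13 (n : ℕ) (E : Fin n → Bool) (P : Finset (MvPolynomial (Fin n) ℚ))
    (π : QSOS n E P) :
    ∀ α : Fin n → Bool,
      (∀ u : Fin n, E u = false →
        α u = decide (eval (fun i => bval (α i)) (π.qu u) < 0)) →
      ∃ p ∈ P, eval (fun i => bval (α i)) p ≠ 0 := by
  intro α hα
  by_contra! hsat
  set x : Fin n → ℚ := fun i => bval (α i)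
  have hP : ∑ p ∈ P, eval x (π.qp p) * eval x p = 0 :=
    Finset.sum_eq_zero fun p hp => by rw [hsat p hp, mul_zero]
  have hU := π.eval_universal_sum_nonneg hα
  have hS := π.sq.sum_map_sq_nonneg (eval x)
  linarith [π.eval_identity x]
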